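/- arXiv:2302.04153 — 3 statements merged into one kernel-verified Lean document; each statement's English description precedes it below -/
import Mathlib

section
/- Let $k$ be an algebraically closed field of characteristic $p > 0$, let $V$ be a finite-dimensional $k$-vector space, let $f : V \to V$ be a $k$-linear bijection, and let $C : V \to V$ be a Frobenius-semilinear map (i.e., additive with $C(\lambda v) = \lambda^p C(v)$ for all $\lambda \in k$, $v \in V$). Then the map $f - C : V \to V$ is surjective. -/
/-!
Composing with `f⁻¹` reduces the claim to surjectivity of `id - D` for a Frobenius-semilinear
`D`. Given `w`, the iterates `yᵢ = Dⁱ w` satisfy a relation `y_{l+1} = ∑_{i ≤ l} aᵢ yᵢ` because `V`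
is Noetherian. Looking for a preimage `v = ∑_{i ≤ l} xᵢ yᵢ` and comparing coefficients leads to the
recursion `x₀ = 1 + a₀ s`, `x_{i+1} = xᵢ ^ p + a_{i+1} s` with `s = x_l ^ p`. Each `xᵢ` is a
polynomial `Qᵢ` in `s`, so it remains to find `t` with `Q_l (t ^ p) = t`; this exists because
`Q_l (X ^ p) - X` has linear coefficient `-1` and `k` is algebraically closed.
-/

open Polynomial Finset Function

theorem exists_succ_eq_sum_range_of_isNoetherian {R M : Type*} [Semiring R] [AddCommMonoid M]
    [Module R M] [IsNoetherian R M] (y : ℕ → M) :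
    ∃ (l : ℕ) (a : ℕ → R), y (l + 1) = ∑ i ∈ range (l + 1), a i • y i := by
  let W : ℕ →o Submodule R M :=
    ⟨fun m => Submodule.span R (y '' ↑(range m)), fun m n hmn =>
      Submodule.span_mono (Set.image_mono (by simpa using hmn))⟩
  obtain ⟨N, hN⟩ := monotone_stabilizes_iff_noetherian.mpr ‹_› W
  have hmem : y (N + 1) ∈ W (N + 2) := Submodule.subset_span ⟨N + 1, by simp, rfl⟩
  rw [← hN (N + 2) (by omega), hN (N + 1) (by omega)] at hmem
  obtain ⟨a, ha⟩ := (Submodule.mem_span_image_finset_iff_exists_fun' R).mp hmem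
  exact ⟨N, a, ha.symm⟩

theorem Polynomial.exists_eval_pow_eq_self {k : Type*} [Field k] [IsAlgClosed k] {p : ℕ}
    (hp : 1 < p) (Q : k[X]) : ∃ t : k, Q.eval (t ^ p) = t := by
  have hcoeff : (expand k p Q - X).coeff 1 = -1 := by
    simp [coeff_expand (by omega : 0 < p), Nat.dvd_one, hp.ne']
  have hdeg : (expand k p Q - X).degree ≠ 0 := by
    intro h
    rw [eq_C_of_degree_le_zero h.le] at hcoeff
    simp at hcoeff
  obtain ⟨t, ht⟩ := IsAlgClosed.exists_root _ hdeg
  exact ⟨t, by simpa [expand_eval, sub_eq_zero] using ht⟩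

noncomputable def frobeniusRecursionPoly {k : Type*} [Field k] (p : ℕ) (a : ℕ → k) : ℕ → k[X]
  | 0 => 1 + C (a 0) * X
  | i + 1 => frobeniusRecursionPoly p a i ^ p + C (a (i + 1)) * X

theorem exists_frobenius_recursion {k : Type*} [Field k] [IsAlgClosed k] {p : ℕ} (hp : 1 < p)
    (a : ℕ → k) (l : ℕ) :
    ∃ x : ℕ → k, x 0 = 1 + a 0 * x l ^ p ∧ ∀ i, x (i + 1) = x i ^ p + a (i + 1) * x l ^ p := by
  obtain ⟨t, ht⟩ := exists_eval_pow_eq_self hp (frobeniusRecursionPoly p a l)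
  refine ⟨fun i => (frobeniusRecursionPoly p a i).eval (t ^ p), ?_, fun i => ?_⟩ <;>
    simp [ht, frobeniusRecursionPoly]

section FrobeniusSemilinear

variable {k V : Type*} [Field k] [AddCommGroup V] [Module k V] {p : ℕ} [ExpChar k p]
  (D : V →ₛₗ[frobenius k p] V)

theorem frobeniusSemilinear_apply_sum_smul_iterate (w : V) (x : ℕ → k) (n : ℕ) :
    D (∑ i ∈ range n, x i • D^[i] w) = ∑ i ∈ range n, x i ^ p • D^[i + 1] w := by
  simp only [map_sum, map_smulₛₗ, frobenius_def, iterate_succ_apply']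

theorem frobeniusSemilinear_sum_smul_iterate_sub_apply (w : V) (l : ℕ) (a x : ℕ → k)
    (hrel : D^[l + 1] w = ∑ i ∈ range (l + 1), a i • D^[i] w)
    (hx₀ : x 0 = 1 + a 0 * x l ^ p) (hx : ∀ i, x (i + 1) = x i ^ p + a (i + 1) * x l ^ p) :
    (∑ i ∈ range (l + 1), x i • D^[i] w) - D (∑ i ∈ range (l + 1), x i • D^[i] w) = w := by
  set y : ℕ → V := fun i => D^[i] w
  set s := x l ^ p
  rw [frobeniusSemilinear_apply_sum_smul_iterate, sub_eq_iff_eq_add]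
  calc ∑ i ∈ range (l + 1), x i • y i
      = x 0 • y 0 + ∑ i ∈ range l, (x i ^ p + a (i + 1) * s) • y (i + 1) := by
        simp only [sum_range_succ' _ l, hx, add_comm]
    _ = y 0 + s • (∑ i ∈ range l, a (i + 1) • y (i + 1) + a 0 • y 0) +
          ∑ i ∈ range l, x i ^ p • y (i + 1) := by
        simp only [hx₀, add_smul, mul_smul, one_smul, sum_add_distrib, smul_add, smul_sum,
          smul_comm s]
        abel
    _ = y 0 + ∑ i ∈ range (l + 1), x i ^ p • y (i + 1) := by
        rw [← sum_range_succ' (fun i => a i • y i), ← hrel, sum_range_succ _ l, add_assoc,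
          add_comm (s • _)]

theorem frobeniusSemilinear_sub_self_surjective [IsAlgClosed k] [FiniteDimensional k V]
    (hp : 1 < p) : Surjective fun v => v - D v := by
  intro w
  obtain ⟨l, a, hrel⟩ := exists_succ_eq_sum_range_of_isNoetherian (R := k) (fun i => D^[i] w)
  obtain ⟨x, hx₀, hx⟩ := exists_frobenius_recursion hp a l
  exact ⟨_, frobeniusSemilinear_sum_smul_iterate_sub_apply D w l a x hrel hx₀ hx⟩

end FrobeniusSemilinear

/-- Semilinear algebra lemma, part (a): over an algebraically closed field `k` of
characteristic `p > 0`, if `f` is a `k`-linear automorphism of a finite-dimensional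
`k`-vector space `V` and `C : V → V` is a Frobenius-semilinear map, then `f - C` is
surjective. -/
theorem stmt0 (k : Type*) [Field k] [IsAlgClosed k] (p : ℕ) [CharP k p] (hp : 0 < p)
    (V : Type*) [AddCommGroup V] [Module k V] [FiniteDimensional k V]
    (f : V →ₗ[k] V) (hf : Function.Bijective f)
    (C : V → V) (Cadd : ∀ x y : V, C (x + y) = C x + C y)
    (Csmul : ∀ (a : k) (v : V), C (a • v) = a ^ p • C v) :
    Function.Surjective (fun v => f v - C v) := by
  have := NeZero.of_pos hp
  have hprime : Fact p.Prime := CharP.char_is_prime_of_pos k p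
  let g := LinearEquiv.ofBijective f hf
  let D : V →ₛₗ[frobenius k p] V :=
    { toFun := fun v => g.symm (C v)
      map_add' := by simp [Cadd]
      map_smul' := by simp [Csmul, frobenius_def] }
  have hfactor : (fun v => f v - C v) = g ∘ fun v => v - D v := by
    funext v
    change f v - C v = g (v - g.symm (C v))
    rw [map_sub, LinearEquiv.apply_symm_apply]
    rfl
  rw [hfactor]
  exact g.surjective.comp (frobeniusSemilinear_sub_self_surjective D hprime.out.one_lt)
end

section
/- Let $k$ be an algebraically closed field of characteristic $p > 0$, $V$ a finite-dimensional $k$-vector space of dimension $n$, $f : V \to V$ a $k$-linear bijection, and $C : V \to V$ a bijective Frobenius-semilinear map. Then $\ker(f - C)$ is an $\mathbb{F}_p$-vector space of dimension exactly $n$, and in particular $\ker(f-C)$ has exactly $p^n$ elements. -/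
/-!
`D = f⁻¹ ∘ C` is a bijective Frobenius-semilinear map whose fixed points form `ker (f - C)`.
These fixed points span `V`, so in a basis of fixed points `D` acts on coordinates by the
Frobenius, whose fixed points in `k` are the `p` roots of `X ^ p - X`.
-/

open Polynomial Finset Submodule Function Module

theorem Polynomial.pow_add_C_mul_X_ne_zero {R : Type*} [CommRing R] [IsDomain R] {n : ℕ}
    (hn : 2 ≤ n) {Q : R[X]} (hQ : Q ≠ 0) (hX : X ∣ Q) (b : R) : Q ^ n + C b * X ≠ 0 := by
  have hQdeg : 1 ≤ Q.natDegree := by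
    obtain ⟨H, rfl⟩ := hX
    rw [natDegree_mul X_ne_zero (right_ne_zero_of_mul hQ), natDegree_X]
    omega
  have hlt : (C b * X).natDegree < (Q ^ n).natDegree := by
    rw [natDegree_pow]
    calc (C b * X).natDegree ≤ 1 := (natDegree_C_mul_le b X).trans natDegree_X_le
      _ < n * Q.natDegree := by nlinarith
  refine ne_zero_of_natDegree_gt (n := 1) ?_
  rw [natDegree_add_eq_left_of_natDegree_lt hlt, natDegree_pow]
  nlinarith

namespace IsAlgClosed

variable {k : Type*} [Field k] [IsAlgClosed k] {n : ℕ}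

theorem exists_pow_sub_self_eq (hn : 2 ≤ n) (a : k) : ∃ x : k, x ^ n - x = a := by
  have hdeg : (X ^ n - X - C a : k[X]).degree ≠ 0 := by
    apply degree_ne_of_natDegree_ne
    rw [natDegree_sub_C, FiniteField.X_pow_card_sub_X_natDegree_eq k hn]
    exact (by omega : n ≠ 0)
  obtain ⟨x, hx⟩ := exists_root _ hdeg
  exact ⟨x, sub_eq_zero.mp (by simpa using hx)⟩

/-- Writing `Q = X * H`, a nonzero root of `X ^ (n - 1) * H ^ n - 1` is the required `s`. -/
theorem exists_ne_zero_eval_pow_eq_self (hn : 2 ≤ n) {Q : k[X]} (hQ : Q ≠ 0) (hX : X ∣ Q) :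
    ∃ s ≠ 0, Q.eval s ^ n = s := by
  obtain ⟨H, rfl⟩ := hX
  have hH : H ≠ 0 := right_ne_zero_of_mul hQ
  have hdeg : (X ^ (n - 1) * H ^ n - 1 : k[X]).degree ≠ 0 := by
    apply degree_ne_of_natDegree_ne
    rw [natDegree_sub_eq_left_of_natDegree_lt] <;>
      rw [natDegree_mul (pow_ne_zero _ X_ne_zero) (pow_ne_zero _ hH), natDegree_X_pow] <;>
      simp
    · exact (by omega : n - 1 + n * H.natDegree ≠ 0)
    · omega
  obtain ⟨s, hs⟩ := exists_root _ hdeg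
  have hs' : s ^ (n - 1) * H.eval s ^ n = 1 := by simpa [sub_eq_zero] using hs
  refine ⟨s, fun h0 => ?_, ?_⟩
  · simp [h0, zero_pow (by omega : n - 1 ≠ 0)] at hs'
  · calc (X * H).eval s ^ n = s * (s ^ (n - 1) * H.eval s ^ n) := by
          rw [eval_mul, eval_X, mul_pow, ← mul_assoc, ← pow_succ', Nat.sub_add_cancel (by omega)]
      _ = s := by rw [hs', mul_one]

/-- The `c i` are values at `s` of polynomials `Q i`, and `Q m` is nonzero because some `b j` is. -/
theorem exists_closed_pow_recurrence (hn : 2 ≤ n) (b : ℕ → k) {m : ℕ} (hb : ∃ j ≤ m, b j ≠ 0) :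
    ∃ s ≠ 0, ∃ c : ℕ → k, c 0 = s * b 0 ∧ (∀ i, c (i + 1) = c i ^ n + s * b (i + 1)) ∧
      c m ^ n = s := by
  obtain ⟨Q, hQ_zero, hQ_succ⟩ : ∃ Q : ℕ → k[X],
      Q 0 = C (b 0) * X ∧ ∀ i, Q (i + 1) = Q i ^ n + C (b (i + 1)) * X :=
    ⟨fun i => Nat.rec (C (b 0) * X) (fun i Qi => Qi ^ n + C (b (i + 1)) * X) i, rfl, fun _ => rfl⟩
  have hQX (i : ℕ) : X ∣ Q i := by
    induction i with
    | zero => rw [hQ_zero]; exact dvd_mul_left X _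
    | succ i ih =>
      rw [hQ_succ]
      exact dvd_add (ih.trans (dvd_pow_self _ (by omega))) (dvd_mul_left X _)
  have hQ_eq_zero (i : ℕ) (hi : Q i = 0) : ∀ j ≤ i, b j = 0 := by
    induction i with
    | zero => simpa [hQ_zero, X_ne_zero] using hi
    | succ i ih =>
      rcases eq_or_ne (Q i) 0 with hQi | hQi
      · rw [hQ_succ, hQi, zero_pow (by omega), zero_add] at hi
        intro j hj
        rcases Nat.le_succ_iff.mp hj with hj | rfl
        · exact ih hQi j hj
        · simpa [X_ne_zero] using hi
      · exact absurd (hQ_succ i ▸ hi) (pow_add_C_mul_X_ne_zero hn hQi (hQX i) _)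
  have hQm : Q m ≠ 0 := fun h => by
    obtain ⟨j, hj, hbj⟩ := hb
    exact hbj (hQ_eq_zero m h j hj)
  obtain ⟨s, hs, hsm⟩ := exists_ne_zero_eval_pow_eq_self hn hQm (hQX m)
  refine ⟨s, hs, fun i => (Q i).eval s, ?_, fun i => ?_, hsm⟩
  · simp only [hQ_zero, eval_mul, eval_C, eval_X, mul_comm]
  · simp only [hQ_succ, eval_add, eval_pow, eval_mul, eval_C, eval_X, mul_comm]

theorem card_fixedPoints_frobenius {p : ℕ} [CharP k p] [Fact p.Prime] :
    Nat.card (fixedPoints (frobenius k p)) = p := by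
  classical
  have hp := (Fact.out : p.Prime).one_lt
  have hroots : fixedPoints (frobenius k p) = ((X ^ p - X : k[X]).roots.toFinset : Set k) := by
    ext a
    simp [mem_roots (FiniteField.X_pow_card_sub_X_ne_zero k hp), IsFixedPt, frobenius_def,
      sub_eq_zero]
  rw [hroots, Nat.card_coe_set_eq, Set.ncard_coe_finset,
    Multiset.toFinset_card_of_nodup (nodup_roots (galois_poly_separable p p dvd_rfl)),
    card_roots_eq_natDegree, FiniteField.X_pow_card_sub_X_natDegree_eq k hp]

end IsAlgClosed

theorem Submodule.exists_notMem_span_image_range_and_succ_mem {R M : Type*} [Semiring R]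
    [AddCommMonoid M] [Module R M] [IsNoetherian R M] {u : ℕ → M} (hu : u 0 ≠ 0) :
    ∃ m, u m ∉ span R (u '' range m) ∧ u (m + 1) ∈ span R (u '' range (m + 1)) := by
  classical
  let W : ℕ →o Submodule R M :=
    ⟨fun n => span R (u '' range n), fun i j hij =>
      span_mono (Set.image_mono (by simpa using range_mono hij))⟩
  have hex : ∃ n, u n ∈ W n := by
    obtain ⟨n, hn⟩ := monotone_stabilizes_iff_noetherian.mpr ‹_› W
    exact ⟨n, (hn (n + 1) n.le_succ).symm ▸ subset_span ⟨n, by simp, rfl⟩⟩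
  obtain ⟨m, hm⟩ : ∃ m, Nat.find hex = m + 1 :=
    Nat.exists_eq_succ_of_ne_zero fun h => by
      have h0 := Nat.find_spec hex
      rw [h] at h0
      exact hu (by simpa [W] using h0)
  exact ⟨m, Nat.find_min hex (by omega), hm ▸ Nat.find_spec hex⟩

theorem Submodule.exists_mem_span_apply_eq {R M : Type*} [Semiring R] [AddCommMonoid M]
    [Module R M] (g : M →+ M) {S : Set M} (h : ∀ a : R, ∀ e ∈ S, ∃ c : R, g (c • e) = a • e)
    {x : M} (hx : x ∈ span R S) : ∃ y ∈ span R S, g y = x := by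
  obtain ⟨n, a, e, rfl⟩ := mem_span_set'.mp hx
  choose c hc using fun i => h (a i) (e i) (e i).2
  exact ⟨∑ i, c i • (e i : M), sum_mem fun i _ => smul_mem _ _ (subset_span (e i).2),
    by simp only [map_sum, hc]⟩

section Frobenius

variable {k V : Type*} [Field k] {p : ℕ} [AddCommGroup V] [Module k V]

theorem sum_smul_isFixedPt_of_recurrence [ExpChar k p] (D : V →ₛₗ[frobenius k p] V) {u : ℕ → V}
    (hu : ∀ i, D (u i) = u (i + 1)) {m : ℕ} {b c : ℕ → k} {s : k}
    (hb : ∑ i ∈ range (m + 1), b i • u i = u (m + 1)) (hc0 : c 0 = s * b 0)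
    (hc : ∀ i, c (i + 1) = c i ^ p + s * b (i + 1)) (hcm : c m ^ p = s) :
    IsFixedPt D (∑ i ∈ range (m + 1), c i • u i) := by
  calc D (∑ i ∈ range (m + 1), c i • u i) = ∑ i ∈ range (m + 1), c i ^ p • u (i + 1) := by
        simp only [map_sum, map_smulₛₗ, frobenius_def, hu]
    _ = ∑ i ∈ range m, c i ^ p • u (i + 1) + s • u (m + 1) := by rw [sum_range_succ, hcm]
    _ = ∑ i ∈ range m, (c i ^ p • u (i + 1) + (s * b (i + 1)) • u (i + 1)) + (s * b 0) • u 0 := by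
        rw [← hb, smul_sum, sum_range_succ', sum_add_distrib, add_assoc]
        simp only [smul_smul]
    _ = ∑ i ∈ range (m + 1), c i • u i := by
        rw [sum_range_succ' _ m, hc0]
        simp only [hc, add_smul]

variable [IsAlgClosed k] [CharP k p] [Fact p.Prime] [FiniteDimensional k V]

/-- In the span of the iterates `D^[i] w` the fixed-point equation for `∑ c i • D^[i] w` becomes
the recurrence of `IsAlgClosed.exists_closed_pow_recurrence`. -/
theorem exists_ne_zero_isFixedPt_of_injective (D : V →ₛₗ[frobenius k p] V) (hD : Injective D)
    {w : V} (hw : w ≠ 0) : ∃ v ≠ 0, IsFixedPt D v := by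
  set u : ℕ → V := fun i => D^[i] w
  obtain ⟨m, hm, hm1⟩ := exists_notMem_span_image_range_and_succ_mem (R := k) (u := u) hw
  obtain ⟨b, hb⟩ := (mem_span_image_finset_iff_exists_fun' k).mp hm1
  have hb_ne : ∃ j ≤ m, b j ≠ 0 := by
    have hu : u (m + 1) ≠ 0 := by
      simpa [u] using (hD.iterate (m + 1)).ne hw
    obtain ⟨j, hj, hbj⟩ := exists_ne_zero_of_sum_ne_zero (hb ▸ hu)
    exact ⟨j, Nat.lt_succ_iff.mp (mem_range.mp hj), left_ne_zero_of_smul hbj⟩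
  obtain ⟨s, hs, c, hc0, hc, hcm⟩ :=
    IsAlgClosed.exists_closed_pow_recurrence (Fact.out : p.Prime).two_le b hb_ne
  refine ⟨_, ?_, sum_smul_isFixedPt_of_recurrence D (fun i => (iterate_succ_apply' D i w).symm)
    hb hc0 hc hcm⟩
  rw [sum_range_succ]
  intro hv
  have hcm_mem : c m • u m ∈ span k (u '' range m) := by
    rw [eq_neg_of_add_eq_zero_right hv]
    exact neg_mem (sum_mem fun i hi => smul_mem _ _ (subset_span ⟨i, hi, rfl⟩))
  exact hm ((smul_mem_iff _ (ne_zero_pow (Fact.out : p.Prime).ne_zero (hcm ▸ hs))).mp hcm_mem)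

/-- The span `W` of the fixed points is mapped onto itself by `D` and, by Artin–Schreier, by
`D - 1`. A fixed point of the induced map on `V ⧸ W` lifts to `v` with `D v - v = D y - y` for some
`y ∈ W`, so `v - y` is fixed and `v ∈ W`. -/
theorem span_fixedPoints_eq_top (D : V →ₛₗ[frobenius k p] V) (hD : Bijective D) :
    span k (fixedPoints D) = ⊤ := by
  set W := span k (fixedPoints D)
  have hp := (Fact.out : p.Prime).two_le
  have hDW : W ≤ W.comap D := span_le.mpr fun v (hv : D v = v) => by
    simpa [hv] using (subset_span hv : v ∈ W)
  have hD_onto (x : V) (hx : x ∈ W) : ∃ y ∈ W, D y = x := by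
    refine exists_mem_span_apply_eq D.toAddMonoidHom (fun a e (he : D e = e) => ?_) hx
    obtain ⟨c, hc⟩ := IsAlgClosed.exists_pow_nat_eq a (by omega : 0 < p)
    exact ⟨c, by simp [he, frobenius_def, hc]⟩
  have hD_sub_one_onto (x : V) (hx : x ∈ W) : ∃ y ∈ W, D y - y = x := by
    refine exists_mem_span_apply_eq (D.toAddMonoidHom - AddMonoidHom.id V)
      (fun a e (he : D e = e) => ?_) hx
    obtain ⟨c, hc⟩ := IsAlgClosed.exists_pow_sub_self_eq hp a
    exact ⟨c, by simp [he, frobenius_def, ← sub_smul, hc]⟩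
  by_contra hW
  have : Nontrivial (V ⧸ W) := Quotient.nontrivial_iff.mpr hW
  have hDq : Injective (W.mapQ W D hDW) := by
    refine (injective_iff_map_eq_zero _).mpr fun x hx => ?_
    obtain ⟨v, rfl⟩ := W.mkQ_surjective x
    rw [mkQ_apply, mapQ_apply, Quotient.mk_eq_zero] at hx
    rw [mkQ_apply, Quotient.mk_eq_zero]
    obtain ⟨y, hy, hyv⟩ := hD_onto _ hx
    exact hD.1 hyv ▸ hy
  obtain ⟨x, hx0⟩ := exists_ne (0 : V ⧸ W)
  obtain ⟨x, hx, hfix⟩ := exists_ne_zero_isFixedPt_of_injective _ hDq hx0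
  obtain ⟨v, rfl⟩ := W.mkQ_surjective x
  obtain ⟨y, hy, hyv⟩ := hD_sub_one_onto _ ((Submodule.Quotient.eq W).mp hfix)
  have hvy : IsFixedPt D (v - y) := by
    rw [IsFixedPt, map_sub, sub_eq_sub_iff_sub_eq_sub, hyv]
  refine hx ((Quotient.mk_eq_zero W).mpr ?_)
  simpa using add_mem (subset_span hvy : v - y ∈ W) hy

theorem card_fixedPoints_of_span_eq_top (D : V →ₛₗ[frobenius k p] V)
    (hspan : span k (fixedPoints D) = ⊤) : Nat.card (fixedPoints D) = p ^ finrank k V := by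
  let b := Basis.ofSpan hspan.ge
  have hb (i) : D (b i) = b i := Basis.ofSpan_subset hspan.ge ⟨i, rfl⟩
  have hDb (v : V) : b.equivFun (D v) = frobenius k p ∘ b.equivFun v := by
    suffices D v = b.equivFun.symm (frobenius k p ∘ b.equivFun v) by
      rw [this, LinearEquiv.apply_symm_apply]
    conv_lhs => rw [← b.sum_equivFun v]
    simp only [map_sum, map_smulₛₗ, hb, Basis.equivFun_symm_apply, comp_apply]
  have e : fixedPoints D ≃ (_ → fixedPoints (frobenius k p)) :=
    (b.equivFun.toEquiv.subtypeEquiv fun v =>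
      b.equivFun.injective.eq_iff.symm.trans (by rw [hDb]; exact funext_iff)).trans
      Equiv.subtypePiEquivPi
  rw [Nat.card_congr e, Nat.card_fun, IsAlgClosed.card_fixedPoints_frobenius,
    finrank_eq_nat_card_basis b]

end Frobenius

/-- In the setting of the semilinear algebra lemma with `C` bijective, `ker (f - C)` is an
`𝔽_p`-vector space of dimension `n = dim_k V`; in particular it has exactly `p ^ n`
elements. -/
theorem stmt3 (k : Type*) [Field k] [IsAlgClosed k] (p : ℕ) [CharP k p] (hp : 0 < p)
    (V : Type*) [AddCommGroup V] [Module k V] [FiniteDimensional k V]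
    (f : V →ₗ[k] V) (hf : Function.Bijective f)
    (C : V → V) (hC : Function.Bijective C)
    (Cadd : ∀ x y : V, C (x + y) = C x + C y)
    (Csmul : ∀ (a : k) (v : V), C (a • v) = a ^ p • C v) :
    Nat.card {v : V // f v - C v = 0} = p ^ (Module.finrank k V) := by
  have : Fact p.Prime := ⟨(CharP.char_is_prime_or_zero k p).resolve_right hp.ne'⟩
  let f' := LinearEquiv.ofBijective f hf
  let C' : V →ₛₗ[frobenius k p] V := { toFun := C, map_add' := Cadd, map_smul' := Csmul }
  let D : V →ₛₗ[frobenius k p] V := f'.symm.toLinearMap ∘ₛₗ C'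
  have hD : Bijective D := f'.symm.bijective.comp hC
  have hker : {v | f v - C v = 0} = fixedPoints D := by
    ext v
    change f v - C v = 0 ↔ f'.symm (C v) = v
    rw [sub_eq_zero, LinearEquiv.symm_apply_eq, eq_comm]
    rfl
  calc Nat.card {v : V // f v - C v = 0} = Nat.card (fixedPoints D) := by rw [← hker]; rfl
    _ = p ^ finrank k V := card_fixedPoints_of_span_eq_top D (span_fixedPoints_eq_top D hD)
end

section
/- Let $k$ be an algebraically closed field of characteristic $p$, $V$ a finite-dimensional $k$-vector space, $i : V \to V$ an injective $k$-linear map and $C : V \to V$ a surjective Frobenius-semilinear map. Then the additive map $i - C : V \to V$ is surjective and its kernel is finite of cardinality $p^{\dim_k V}$. -/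
/-!
Put `ψ = i⁻¹ ∘ C`, a surjective (hence, counting dimensions, injective) Frobenius-semilinear
endomorphism of `V`. The heart of the matter is that the fixed points of `ψ` span `V`. In a
cyclic subspace with basis `u, ψ u, …, ψⁿ u` the fixed-point equation reduces to a one-variable
equation `f(t) = t` with `X² ∣ f ≠ 0`, which has a nonzero root since `k` is algebraically
closed; so `ψ` has a nonzero fixed vector as soon as `V ≠ 0`. Applied to `V ⧸ W`, where `W` is
the span of the fixed points, together with the solvability of `a - a ^ p = b` in `W`, this
forces `W = V`. In a basis of fixed vectors `ψ` is coordinatewise Frobenius, so `v ↦ v - ψ v` is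
surjective and the fixed points form `{a // a ^ p = a} ^ n`, of cardinality `p ^ n` since
`X ^ p - X` is separable of degree `p`.
-/

open Function Polynomial Submodule Finset

namespace LinearMap

variable {K V : Type*} [DivisionRing K] [AddCommGroup V] [Module K V] [FiniteDimensional K V]

theorem injective_of_surjective {σ : K →+* K} {ψ : V →ₛₗ[σ] V} (hψ : Surjective ψ) :
    Injective ψ := by
  let b := Module.finBasis K V
  have hspan : ⊤ ≤ span K (Set.range (ψ ∘ b)) := by
    rintro w -
    obtain ⟨v, rfl⟩ := hψ w
    rw [← b.sum_repr v, map_sum]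
    exact sum_mem fun j _ => by
      rw [map_smulₛₗ]; exact smul_mem _ _ (subset_span ⟨j, rfl⟩)
  have hli : LinearIndependent K (ψ ∘ b) :=
    linearIndependent_of_top_le_span_of_card_eq_finrank hspan (by simp)
  refine (injective_iff_map_eq_zero ψ).2 fun v hv => ?_
  rw [← b.sum_repr v, map_sum] at hv
  simp only [map_smulₛₗ] at hv
  have hσ := Fintype.linearIndependent_iff.1 hli _ hv
  rw [← b.sum_repr v]
  simp [fun j => (map_eq_zero σ).1 (hσ j)]

theorem exists_basis_forall_apply_eq_self {σ : K →+* K} (ψ : V →ₛₗ[σ] V)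
    (h : span K {v | ψ v = v} = ⊤) :
    ∃ B : Module.Basis (Fin (Module.finrank K V)) K V, ∀ i, ψ (B i) = B i := by
  obtain ⟨s, hsF, hspan, hli⟩ := exists_linearIndependent K {v | ψ v = v}
  have := hli.finite
  have : Fintype s := Fintype.ofFinite s
  let B := Module.Basis.mk hli (by rw [Subtype.range_coe, hspan, h])
  exact ⟨B.reindex (Fintype.equivFinOfCardEq (Module.finrank_eq_card_basis B).symm),
    fun i => by simpa [B] using hsF (Subtype.prop _)⟩

end LinearMap

namespace Module.Basis

variable {R M ι : Type*} [Ring R] [AddCommGroup M] [Module R M] {σ : R →+* R}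
  {ψ : M →ₛₗ[σ] M} [Fintype ι] (B : Basis ι R M)

theorem repr_apply_of_forall_apply_eq_self (hB : ∀ i, ψ (B i) = B i) (v : M) (i : ι) :
    B.repr (ψ v) i = σ (B.repr v i) := by
  have hψv : ψ v = ∑ j, σ (B.repr v j) • B j := by
    conv_lhs => rw [← B.sum_repr v]
    simp only [map_sum, map_smulₛₗ, hB]
  rw [hψv, B.repr_sum_self]

theorem surjective_sub_of_forall_apply_eq_self (hB : ∀ i, ψ (B i) = B i)
    (hσ : Surjective fun a => a - σ a) : Surjective fun v => v - ψ v := by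
  intro w
  choose r hr using fun i => hσ (B.repr w i)
  refine ⟨∑ i, r i • B i, B.ext_elem fun i => ?_⟩
  rw [map_sub, Finsupp.sub_apply, B.repr_apply_of_forall_apply_eq_self hB, B.repr_sum_self]
  exact hr i

theorem card_fixedPoints_of_forall_apply_eq_self (hB : ∀ i, ψ (B i) = B i) :
    Nat.card {v // ψ v = v} = Nat.card {a // σ a = a} ^ Fintype.card ι := by
  rw [← Nat.card_eq_fintype_card, ← Nat.card_fun]
  refine Nat.card_congr ((B.equivFun.toEquiv.subtypeEquiv fun v => ?_).trans
    Equiv.subtypePiEquivPi)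
  simp [B.ext_elem_iff, B.repr_apply_of_forall_apply_eq_self hB]

end Module.Basis

theorem exists_linearIndepOn_range_and_eq_sum (K : Type*) {V : Type*} [DivisionRing K]
    [AddCommGroup V] [Module K V] [FiniteDimensional K V] (f : ℕ → V) :
    ∃ m, LinearIndepOn K f (range m) ∧ ∃ b : ℕ → K, f m = ∑ j ∈ range m, b j • f j := by
  classical
  have hdep : ∃ n, ¬ LinearIndepOn K f (range n) :=
    ⟨Module.finrank K V + 1, fun h => by simpa using h.fintype_card_le_finrank⟩
  obtain ⟨m, hm⟩ : ∃ m, Nat.find hdep = m + 1 := Nat.exists_eq_add_one_of_ne_zero fun h =>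
    Nat.find_spec hdep (by rw [h, range_zero, coe_empty]; exact linearIndepOn_empty K f)
  have hli : LinearIndepOn K f (range m) := not_not.1 (Nat.find_min hdep (by rw [hm]; omega))
  have hnot := Nat.find_spec hdep
  rw [hm, range_add_one, coe_insert, linearIndepOn_insert (by simp), not_and_not_right] at hnot
  obtain ⟨b, hb⟩ := (mem_span_image_finset_iff_exists_fun' K).1 (hnot hli)
  exact ⟨m, hli, b, hb.symm⟩

namespace IsAlgClosed

variable {k : Type*} [Field k] [IsAlgClosed k]

theorem surjective_sub_pow {p : ℕ} (hp : 1 < p) : Surjective fun a : k => a - a ^ p := by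
  intro b
  have hdeg : (X ^ p - X + C b : k[X]).natDegree = p := by
    rw [natDegree_add_C, FiniteField.X_pow_card_sub_X_natDegree_eq k hp]
  obtain ⟨a, ha⟩ := exists_root (X ^ p - X + C b)
    (natDegree_pos_iff_degree_pos.1 (by omega)).ne'
  refine ⟨a, ?_⟩
  simp only [IsRoot, eval_add, eval_sub, eval_pow, eval_X, eval_C] at ha
  linear_combination -ha

theorem card_pow_eq_self (p : ℕ) [Fact p.Prime] [CharP k p] :
    Nat.card {a : k // a ^ p = a} = p := by
  have hp := (Fact.out : p.Prime).one_lt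
  have hne : (X ^ p - X : k[X]) ≠ 0 := FiniteField.X_pow_card_sub_X_ne_zero k hp
  have hroots : {a : k // a ^ p = a} ≃ (X ^ p - X : k[X]).rootSet k :=
    Equiv.subtypeEquivRight fun a => by simp [mem_rootSet, hne, sub_eq_zero]
  rw [Nat.card_congr hroots, Nat.card_eq_fintype_card,
    card_rootSet_eq_natDegree (galois_poly_separable p p dvd_rfl) (IsAlgClosed.splits _),
    FiniteField.X_pow_card_sub_X_natDegree_eq k hp]

theorem exists_ne_zero_eval_eq_self {f : k[X]} (hf : f ≠ 0) (hX : X ^ 2 ∣ f) :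
    ∃ t ≠ 0, f.eval t = t := by
  obtain ⟨g, rfl⟩ := hX
  have hg : g ≠ 0 := right_ne_zero_of_mul hf
  have hdeg : (X * g - 1).natDegree = g.natDegree + 1 := by
    rw [← C_1, natDegree_sub_C, natDegree_X_mul hg]
  obtain ⟨t, ht⟩ := exists_root (X * g - 1) (natDegree_pos_iff_degree_pos.1 (by omega)).ne'
  have htg : t * g.eval t = 1 := by
    simpa [sub_eq_zero] using ht
  refine ⟨t, left_ne_zero_of_mul_eq_one htg, ?_⟩
  simp only [eval_mul, eval_pow, eval_X]
  linear_combination t * htg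

end IsAlgClosed

section FixedPoints

variable {k : Type*} [Field k]

/-- If `u, ψ u, …, ψⁿ u` are independent and `ψⁿ⁺¹ u = ∑_{j ≤ n} b j • ψʲ u`, the vector
`∑_{j ≤ n} c j • ψʲ u` is fixed by the Frobenius-semilinear `ψ` iff
`c j = (fixedCoordPoly p b j).eval (c n)` for all `j ≤ n`. -/
noncomputable def fixedCoordPoly (p : ℕ) (b : ℕ → k) : ℕ → k[X]
  | 0 => C (b 0) * X ^ p
  | j + 1 => fixedCoordPoly p b j ^ p + C (b (j + 1)) * X ^ p

theorem X_pow_dvd_fixedCoordPoly {p : ℕ} (hp : p ≠ 0) (b : ℕ → k) (j : ℕ) :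
    X ^ p ∣ fixedCoordPoly p b j := by
  induction j with
  | zero => exact dvd_mul_left _ _
  | succ j ih => exact dvd_add (ih.trans (dvd_pow_self _ hp)) (dvd_mul_left _ _)

theorem natDegree_fixedCoordPoly {p : ℕ} (hp : 1 < p) {b : ℕ → k} (hb : b 0 ≠ 0) (j : ℕ) :
    (fixedCoordPoly p b j).natDegree = p ^ (j + 1) := by
  induction j with
  | zero => simp [fixedCoordPoly, natDegree_C_mul_X_pow _ _ hb]
  | succ j ih =>
    have hlt : (C (b (j + 1)) * X ^ p).natDegree < (fixedCoordPoly p b j ^ p).natDegree := by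
      rw [natDegree_pow, ih]
      calc (C (b (j + 1)) * X ^ p).natDegree ≤ p := natDegree_C_mul_X_pow_le _ _
        _ < p * p ^ (j + 1) := lt_mul_right (by omega) (Nat.one_lt_pow (by omega) hp)
    rw [fixedCoordPoly, natDegree_add_eq_left_of_natDegree_lt hlt, natDegree_pow, ih,
      pow_succ' p (j + 1)]

variable {V : Type*} [AddCommGroup V] [Module k V] {p : ℕ} [Fact p.Prime] [CharP k p]
  [IsAlgClosed k] (ψ : V →ₛₗ[frobenius k p] V) {u : V} {n : ℕ} {b : ℕ → k}

theorem coeff_zero_ne_zero_of_iterate_eq_sum (hψ : Injective ψ)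
    (hli : LinearIndepOn k (fun j => ψ^[j] u) (range (n + 1)))
    (hrel : ψ^[n + 1] u = ∑ j ∈ range (n + 1), b j • ψ^[j] u) : b 0 ≠ 0 := by
  intro hb
  choose r hr using fun j => IsAlgClosed.exists_pow_nat_eq (b (j + 1)) (Fact.out : p.Prime).pos
  have hn : ψ^[n] u = ∑ j ∈ range n, r j • ψ^[j] u := by
    apply hψ
    rw [← iterate_succ_apply' ψ n, hrel, sum_range_succ', hb, zero_smul, add_zero, map_sum]
    refine sum_congr rfl fun j _ => ?_
    rw [map_smulₛₗ, frobenius_def, hr, iterate_succ_apply']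
  rw [range_add_one, coe_insert] at hli
  refine hli.notMem_span_of_insert (by simp) ?_
  rw [hn]
  exact sum_mem fun j hj => smul_mem _ _ (subset_span ⟨j, hj, rfl⟩)

theorem exists_ne_zero_apply_eq_self_of_iterate_eq_sum
    (hli : LinearIndepOn k (fun j => ψ^[j] u) (range (n + 1))) (hb : b 0 ≠ 0)
    (hrel : ψ^[n + 1] u = ∑ j ∈ range (n + 1), b j • ψ^[j] u) :
    ∃ v ≠ 0, ψ v = v := by
  have hp := (Fact.out : p.Prime).two_le
  set Q := fixedCoordPoly p b
  obtain ⟨t, ht0, ht⟩ := IsAlgClosed.exists_ne_zero_eval_eq_self (f := Q n)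
    (ne_zero_of_natDegree_gt (n := 0)
      (by rw [natDegree_fixedCoordPoly (by omega) hb]; positivity))
    ((pow_dvd_pow X hp).trans (X_pow_dvd_fixedCoordPoly (by omega) b n))
  set c := fun j => (Q j).eval t
  have hc0 : c 0 = t ^ p * b 0 := by
    simp only [c, Q, fixedCoordPoly, eval_mul, eval_pow, eval_C, eval_X, mul_comm]
  have hcs : ∀ j, c (j + 1) = c j ^ p + t ^ p * b (j + 1) := fun j => by
    simp only [c, Q, fixedCoordPoly, eval_add, eval_mul, eval_pow, eval_C, eval_X, mul_comm]
  refine ⟨∑ j ∈ range (n + 1), c j • ψ^[j] u, fun h0 => ht0 ?_, ?_⟩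
  · rw [← ht]
    exact linearIndepOn_finset_iff.1 hli c h0 n (self_mem_range_succ n)
  · have hψ : ∀ j, ψ (c j • ψ^[j] u) = c j ^ p • ψ^[j + 1] u := fun j => by
      rw [map_smulₛₗ, frobenius_def, iterate_succ_apply']
    rw [map_sum, sum_congr rfl fun j _ => hψ j, sum_range_succ, show c n = t from ht, hrel,
      smul_sum, sum_range_succ', sum_range_succ' (fun j => c j • _), ← add_assoc,
      ← sum_add_distrib]
    simp only [smul_smul, ← add_smul, hc0, hcs]

variable [FiniteDimensional k V]

theorem exists_ne_zero_apply_eq_self [Nontrivial V] (hψ : Injective ψ) :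
    ∃ v ≠ 0, ψ v = v := by
  obtain ⟨u, hu⟩ := exists_ne (0 : V)
  obtain ⟨_ | n, hli, b, hrel⟩ := exists_linearIndepOn_range_and_eq_sum k (fun j => ψ^[j] u)
  · exact absurd (by simpa using hrel) hu
  · exact exists_ne_zero_apply_eq_self_of_iterate_eq_sum ψ hli
      (coeff_zero_ne_zero_of_iterate_eq_sum ψ hψ hli hrel) hrel

theorem span_setOf_apply_eq_self_eq_top (hψ : Surjective ψ) :
    span k {v | ψ v = v} = ⊤ := by
  set W := span k {v | ψ v = v}
  have hW : W ≤ W.comap ψ := span_le.2 fun v (hv : ψ v = v) => by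
    simpa [hv] using (subset_span hv : v ∈ W)
  have hsub : Surjective fun w : W => w - ψ.restrict hW w := by
    have hfixW : {w : W | ψ.restrict hW w = w} = (↑) ⁻¹' {v | ψ v = v} :=
      Set.ext fun _ => Subtype.ext_iff
    obtain ⟨B, hB⟩ := (ψ.restrict hW).exists_basis_forall_apply_eq_self
      (by rw [hfixW, span_span_coe_preimage])
    exact B.surjective_sub_of_forall_apply_eq_self hB
      (IsAlgClosed.surjective_sub_pow (Fact.out : p.Prime).one_lt)
  have hq : Injective (W.mapQ W ψ hW) := LinearMap.injective_of_surjective fun y => by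
    obtain ⟨x, rfl⟩ := W.mkQ_surjective y
    obtain ⟨v, rfl⟩ := hψ x
    exact ⟨W.mkQ v, rfl⟩
  rw [← Submodule.Quotient.subsingleton_iff, ← not_nontrivial_iff_subsingleton]
  intro
  obtain ⟨x, hx0, hx⟩ := exists_ne_zero_apply_eq_self _ hq
  obtain ⟨x, rfl⟩ := W.mkQ_surjective x
  obtain ⟨c, hc⟩ := hsub ⟨x - ψ x, (Submodule.Quotient.eq W).1 hx.symm⟩
  have hc' : (c : V) - ψ c = x - ψ x := congrArg Subtype.val hc
  have hfix : x - c ∈ W := subset_span (show ψ (x - c) = x - c by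
    rw [map_sub]; linear_combination (norm := abel) hc')
  exact hx0 ((Submodule.Quotient.mk_eq_zero W).2 (by simpa using add_mem hfix c.2))

end FixedPoints

/-- If `i : V → V` is an injective `k`-linear map and `C : V → V` a surjective
Frobenius-semilinear map on a finite-dimensional vector space over an algebraically
closed field of characteristic `p`, then `i - C` is surjective with kernel of
cardinality `p ^ dim_k V`. -/
theorem stmt17 (k : Type*) [Field k] [IsAlgClosed k] (p : ℕ) [CharP k p] (hp : 0 < p)
    (V : Type*) [AddCommGroup V] [Module k V] [FiniteDimensional k V]
    (i : V →ₗ[k] V) (hi : Function.Injective i)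
    (C : V → V) (hC : Function.Surjective C)
    (Cadd : ∀ x y : V, C (x + y) = C x + C y)
    (Csmul : ∀ (a : k) (v : V), C (a • v) = a ^ p • C v) :
    Function.Surjective (fun v => i v - C v) ∧
    Nat.card {v : V // i v - C v = 0} = p ^ (Module.finrank k V) := by
  have : Fact p.Prime := ⟨(CharP.char_is_prime_or_zero k p).resolve_right hp.ne'⟩
  let I := LinearEquiv.ofInjectiveEndo i hi
  let Cₛₗ : V →ₛₗ[frobenius k p] V := { toFun := C, map_add' := Cadd, map_smul' := Csmul }
  let ψ := I.symm.toLinearMap.comp Cₛₗ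
  have hiC : ∀ v, i v - C v = I (v - ψ v) := fun v => by
    simp only [ψ, map_sub, LinearMap.comp_apply, LinearEquiv.coe_coe, I.apply_symm_apply]; rfl
  obtain ⟨B, hB⟩ := ψ.exists_basis_forall_apply_eq_self
    (span_setOf_apply_eq_self_eq_top ψ (I.symm.surjective.comp hC))
  refine ⟨?_, ?_⟩
  · simpa only [hiC, comp_def] using I.surjective.comp
      (B.surjective_sub_of_forall_apply_eq_self hB
        (IsAlgClosed.surjective_sub_pow (Fact.out : p.Prime).one_lt))
  · have hker : ∀ v, i v - C v = 0 ↔ ψ v = v := fun v => by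
      rw [hiC, map_eq_zero_iff I I.injective, sub_eq_zero, eq_comm]
    rw [Nat.card_congr (Equiv.subtypeEquivRight hker),
      B.card_fixedPoints_of_forall_apply_eq_self hB, Fintype.card_fin]
    exact congrArg (· ^ _) (IsAlgClosed.card_pow_eq_self p)
end
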